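/- arXiv:1603.02368 — 2 statements merged into one kernel-verified Lean document; each statement's English description precedes it below -/
import Mathlib

section
/- Fix r ∈ (0,1). For each positive integer n, let θ_n be the unique angle in (0, π/2) satisfying (n+1)·cos θ_n + sin θ_n = n + r. Then there exists N such that for all n ≥ N, θ_n < √2·(n + r)^(−1/2). -/
open MeasureTheory

/-- Rotation of the plane by angle `θ`. -/
noncomputable def rot (θ : ℝ) (p : ℝ × ℝ) : ℝ × ℝ :=
  (Real.cos θ * p.1 - Real.sin θ * p.2, Real.sin θ * p.1 + Real.cos θ * p.2)

/-- A unit square in `ℝ²`: the image of `[0,1] × [0,1]` under a rigid motion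
(a rotation composed with a translation). -/
def IsUnitSquare (S : Set (ℝ × ℝ)) : Prop :=
  ∃ θ : ℝ, ∃ v : ℝ × ℝ,
    S = (fun p => v + rot θ p) '' (Set.Icc (0:ℝ) 1 ×ˢ Set.Icc (0:ℝ) 1)

/-- A finite family of unit squares with pairwise disjoint interiors, each contained in `A`. -/
def IsPacking (A : Set (ℝ × ℝ)) (F : Finset (Set (ℝ × ℝ))) : Prop :=
  (∀ S ∈ F, IsUnitSquare S ∧ S ⊆ A) ∧
  (∀ S ∈ F, ∀ T ∈ F, S ≠ T → interior S ∩ interior T = ∅)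

/-- The packing waste `W(A)`: the area of `A` minus the supremum of the total area
covered by a finite family of non-overlapping unit squares packed into `A`. -/
noncomputable def packingWaste (A : Set (ℝ × ℝ)) : ℝ :=
  (volume A).toReal -
    sSup {t : ℝ | ∃ F : Finset (Set (ℝ × ℝ)), IsPacking A F ∧
      t = (volume (⋃ S ∈ F, S)).toReal}

/-- A finite family of unit squares whose union contains `A`. -/
def IsCovering (A : Set (ℝ × ℝ)) (F : Finset (Set (ℝ × ℝ))) : Prop :=
  (∀ S ∈ F, IsUnitSquare S) ∧ A ⊆ ⋃ S ∈ F, S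

/-- The covering waste `W'(A)`: the infimum of the number of unit squares in a finite
family covering `A`, minus the area of `A`. -/
noncomputable def coveringWaste (A : Set (ℝ × ℝ)) : ℝ :=
  sInf {t : ℝ | ∃ F : Finset (Set (ℝ × ℝ)), IsCovering A F ∧ t = (F.card : ℝ)} -
    (volume A).toReal

/-! With `m = n + r` and `t = √(2 / m)`, the map `x ↦ (n + 1) cos x + sin x` is decreasing on
`[t, π / 2]` because `(n + 1) sin t ≥ 1`, and `cos t ≤ 1 - t² / 2 + O(t⁴)` gives
`(n + 1) cos t + sin t ≤ m - r + t + O(1 / m) < m` for large `m`. Since the map takes the value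
`m` at `θ_n`, this forces `θ_n < t`. -/

open Real Set Filter

lemma antitoneOn_mul_cos_add_sin {A t : ℝ} (ht : 0 ≤ t) (hA : 1 ≤ A * sin t) :
    AntitoneOn (fun x => A * cos x + sin x) (Icc t (π / 2)) := by
  have hderiv (x : ℝ) : HasDerivAt (fun x => A * cos x + sin x) (A * -sin x + cos x) x :=
    ((hasDerivAt_cos x).const_mul A).add (hasDerivAt_sin x)
  refine antitoneOn_of_hasDerivWithinAt_nonpos (convex_Icc _ _) (by fun_prop)
    (fun x _ => (hderiv x).hasDerivWithinAt) fun x hx => ?_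
  rw [interior_Icc] at hx
  have hsin_nonneg : 0 ≤ sin t := sin_nonneg_of_nonneg_of_le_pi ht (by linarith [pi_pos, hx.1, hx.2])
  have hsin : sin t ≤ sin x :=
    sin_le_sin_of_le_of_le_pi_div_two (by linarith [pi_pos]) hx.2.le hx.1.le
  have hA0 : 0 ≤ A := by
    by_contra! hA0
    nlinarith
  nlinarith [cos_le_one x]

lemma lt_of_mul_cos_add_sin_eq {A m t θ : ℝ} (ht : 0 ≤ t) (hA : 1 ≤ A * sin t)
    (hθ : θ ≤ π / 2) (heq : A * cos θ + sin θ = m) (hlt : A * cos t + sin t < m) : θ < t := by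
  by_contra! htθ
  have := antitoneOn_mul_cos_add_sin ht hA ⟨le_rfl, htθ.trans hθ⟩ ⟨htθ, hθ⟩ htθ
  dsimp only at this
  linarith

lemma one_le_mul_sin_of_mul_sq_eq_two {A m t : ℝ} (ht : 0 < t) (hmt : m * t ^ 2 = 2)
    (hm : 8 < m) (hA : m ≤ A) : 1 ≤ A * sin t := by
  have ht2 : t < 1 / 2 := by
    have : 8 * t ^ 2 < m * t ^ 2 := by gcongr
    exact lt_of_pow_lt_pow_left₀ 2 (by norm_num) (by linarith)
  have hsin : 2 / π * t ≤ sin t := mul_le_sin ht.le (by linarith [pi_gt_three])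
  have hsin' : t / 2 ≤ sin t := by
    refine le_trans ?_ hsin
    rw [div_mul_eq_mul_div, div_le_div_iff₀ two_pos pi_pos]
    nlinarith [pi_lt_four]
  have hmt4 : 4 < m * t := by nlinarith
  nlinarith

lemma mul_cos_add_sin_lt_of_mul_sq_eq_two {m r t : ℝ} (ht : 0 < t) (hmt : m * t ^ 2 = 2)
    (hr0 : 0 < r) (hr1 : r ≤ 1) (hm : 8 / r ^ 2 < m) :
    (m + (1 - r)) * cos t + sin t < m := by
  have hm0 : 0 < m := lt_trans (by positivity) hm
  have hmr : 8 < m * r ^ 2 := by rwa [div_lt_iff₀ (by positivity)] at hm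
  have htr : t < r / 2 := by
    have : 8 * t ^ 2 < m * r ^ 2 * t ^ 2 := by gcongr
    exact lt_of_pow_lt_pow_left₀ 2 (by positivity) (by nlinarith)
  have hcos : cos t ≤ 1 - t ^ 2 / 2 + t ^ 4 * (5 / 96) := by
    have h := abs_le.mp (cos_bound (x := t) (by rw [abs_of_pos ht]; nlinarith))
    rw [abs_of_pos ht] at h
    linarith [h.2]
  have hmcos : m * cos t ≤ m - 1 + 5 / 48 * t ^ 2 := by nlinarith
  nlinarith [sin_le ht.le, cos_le_one t]

lemma sqrt_mul_rpow_neg_half (a : ℝ) {m : ℝ} (hm : 0 ≤ m) :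
    √a * m ^ (-(1 : ℝ) / 2) = √(a / m) := by
  rw [sqrt_div' a hm, neg_div, rpow_neg hm, ← sqrt_eq_rpow, div_eq_mul_inv]

theorem packing_angle_eventually_lt (r : ℝ) (hr : r ∈ Set.Ioo (0:ℝ) 1) (θ : ℕ → ℝ)
    (hθ : ∀ n : ℕ, 0 < n → θ n ∈ Set.Ioo 0 (Real.pi / 2) ∧
      ((n : ℝ) + 1) * Real.cos (θ n) + Real.sin (θ n) = (n : ℝ) + r) :
    ∃ N : ℕ, ∀ n ≥ N, θ n < Real.sqrt 2 * ((n : ℝ) + r) ^ (-(1:ℝ)/2) := by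
  obtain ⟨hr0, hr1⟩ := hr
  have hlarge : ∀ᶠ n : ℕ in atTop, 0 < n ∧ 8 / r ^ 2 < (n : ℝ) + r :=
    (eventually_gt_atTop 0).and <|
      (tendsto_natCast_atTop_atTop.atTop_add tendsto_const_nhds).eventually_gt_atTop _
  obtain ⟨N, hN⟩ := eventually_atTop.mp hlarge
  refine ⟨N, fun n hn => ?_⟩
  obtain ⟨hn0, hm⟩ := hN n hn
  obtain ⟨⟨-, hθπ⟩, heq⟩ := hθ n hn0
  set m := (n : ℝ) + r
  have hm8 : 8 < m := by
    refine lt_of_le_of_lt ?_ hm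
    rw [le_div_iff₀ (by positivity)]
    nlinarith
  have hm0 : 0 < m := by linarith
  rw [sqrt_mul_rpow_neg_half 2 hm0.le]
  have ht : 0 < √(2 / m) := sqrt_pos.mpr (by positivity)
  have hmt : m * √(2 / m) ^ 2 = 2 := by rw [sq_sqrt (by positivity)]; field_simp
  have hA : (n : ℝ) + 1 = m + (1 - r) := by ring
  refine lt_of_mul_cos_add_sin_eq ht.le
    (one_le_mul_sin_of_mul_sq_eq_two ht hmt hm8 (by linarith)) hθπ.le heq ?_
  rw [hA]
  exact mul_cos_add_sin_lt_of_mul_sq_eq_two ht hmt hr0 hr1.le hm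
end

section
/- Fix r ∈ (0,1). For each positive integer n, let θ'_n be the unique angle in (0, π/2) satisfying (n+1)·cos θ'_n − sin θ'_n = n + r. Then there exists N such that for all n ≥ N, θ'_n < √2·(n + r)^(−1/2). -/
open MeasureTheory

/-!
`f(θ) = (n+1) cos θ - sin θ` decreases on `[0, π/2]`. At `t = √(2/(n+r))` the quadratic Taylor
term of the cosine already lowers `(n+1) cos t` to at most `n`, and the quartic error is absorbed by
`sin t`, so `f(t) < n < n + r = f(θ'ₙ)`, whence `θ'ₙ < t`.
-/

open Real Set

theorem antitoneOn_mul_cos_sub_sin {a : ℝ} (ha : 0 ≤ a) :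
    AntitoneOn (fun θ => a * cos θ - sin θ) (Icc 0 (π / 2)) := by
  intro s hs t ht hst
  have hcos : cos t ≤ cos s :=
    cos_le_cos_of_nonneg_of_le_pi hs.1 (by linarith [ht.2, pi_pos]) hst
  have hsin : sin s ≤ sin t :=
    sin_le_sin_of_le_of_le_pi_div_two (by linarith [hs.1, pi_pos]) ht.2 hst
  dsimp only
  nlinarith

theorem sqrt_two_mul_rpow_neg_half {x : ℝ} (hx : 0 ≤ x) :
    √2 * x ^ (-(1 : ℝ) / 2) = √(2 / x) := by
  rw [neg_div, rpow_neg hx, ← sqrt_eq_rpow, sqrt_div' _ hx, div_eq_mul_inv]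

theorem mul_cos_sub_sin_sqrt_two_div_lt {a x : ℝ} (hx : 2 ≤ x) (hxa : x ≤ a) (hax : a ≤ x + 1) :
    a * cos √(2 / x) - sin √(2 / x) < a - 1 := by
  set t := √(2 / x)
  have hx0 : 0 < x := by linarith
  have ht0 : 0 < t := sqrt_pos.2 (by positivity)
  have ht_sq : t ^ 2 = 2 / x := sq_sqrt (by positivity)
  have ht_sq_le : t ^ 2 ≤ 1 := by rw [ht_sq, div_le_one hx0]; linarith
  have ht_le : t ≤ 1 := by nlinarith
  have hcos : cos t ≤ 1 - t ^ 2 / 2 + t ^ 4 * (5 / 96) := by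
    have := (abs_le.1 (cos_bound (x := t) (by rwa [abs_of_pos ht0]))).2
    rw [abs_of_pos ht0] at this
    linarith
  have hsin : t - t ^ 3 / 6 < sin t := sin_gt_sub_cube ht0
  have hdrop : 1 ≤ a * (t ^ 2 / 2) := by
    rw [ht_sq, div_div_cancel_left' two_ne_zero, ← div_eq_mul_inv]
    exact (one_le_div hx0).2 hxa
  have hquart : a * t ^ 4 ≤ 3 * t ^ 2 := by
    have : a * t ^ 2 ≤ 3 := by rw [ht_sq, mul_div_assoc', div_le_iff₀ hx0]; linarith
    nlinarith
  have hcubic : 3 * t ^ 2 * (5 / 96) + t ^ 3 / 6 < t := by nlinarith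
  calc a * cos t - sin t
      < a * (1 - t ^ 2 / 2 + t ^ 4 * (5 / 96)) - (t - t ^ 3 / 6) := by
        linarith [mul_le_mul_of_nonneg_left hcos (by linarith : 0 ≤ a)]
    _ = a - a * (t ^ 2 / 2) + a * t ^ 4 * (5 / 96) - t + t ^ 3 / 6 := by ring
    _ ≤ a - 1 := by linarith

theorem covering_angle_eventually_lt (r : ℝ) (hr : r ∈ Set.Ioo (0:ℝ) 1) (θ' : ℕ → ℝ)
    (hθ' : ∀ n : ℕ, 0 < n → θ' n ∈ Set.Ioo 0 (Real.pi / 2) ∧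
      ((n : ℝ) + 1) * Real.cos (θ' n) - Real.sin (θ' n) = (n : ℝ) + r) :
    ∃ N : ℕ, ∀ n ≥ N, θ' n < Real.sqrt 2 * ((n : ℝ) + r) ^ (-(1:ℝ)/2) := by
  obtain ⟨hr0, hr1⟩ := hr
  refine ⟨2, fun n hn => ?_⟩
  obtain ⟨hθ, heq⟩ := hθ' n (by omega)
  have hn : (2 : ℝ) ≤ n := by exact_mod_cast hn
  rw [sqrt_two_mul_rpow_neg_half (by linarith)]
  by_contra! hle
  have ht : √(2 / (n + r)) ∈ Icc 0 (π / 2) := by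
    refine ⟨sqrt_nonneg _, le_trans ?_ (by linarith [pi_gt_three] : (1 : ℝ) ≤ π / 2)⟩
    exact sqrt_le_one.2 ((div_le_one (by linarith)).2 (by linarith))
  have hmono := antitoneOn_mul_cos_sub_sin (by positivity : (0 : ℝ) ≤ n + 1) ht
    (Ioo_subset_Icc_self hθ) hle
  have hlt := mul_cos_sub_sin_sqrt_two_div_lt (a := n + 1) (x := n + r)
    (by linarith) (by linarith) (by linarith)
  dsimp only at hmono
  linarith
end
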